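/- arXiv:2509.15381 — 2 statements merged into one kernel-verified Lean document; each statement's English description precedes it below -/
import Mathlib

section
/- In a finite state space with strictly positive minimum transition cost δ > 0, if a heuristic h is updated at each visit of a state s by h(s) ← max(h(s), δ + min over successors s' of h(s')) and the agent always moves to a successor minimizing δ + h(s'), then if the agent visits some state infinitely often, the heuristic value of at least one state in the recurrent set increases without bound. -/
/-- In a finite state space with minimum transition cost δ > 0, an
LRTA*-style agent that updates h(s) ← max(h(s), δ + min_{s'∈succ(s)} h(s')) at each
visited state and always moves to a successor minimizing δ + h(s'), if it visits some
state infinitely often (never reaching the goal), then the heuristic value of at least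
one state in the recurrent set increases without bound. -/
theorem lrta_heuristic_unbounded
    {S : Type*} [Fintype S] [DecidableEq S]
    (goal : S) (succ : S → Finset S) (δ : ℝ)
    (path : ℕ → S) (h : ℕ → S → ℝ)
    (hδ : 0 < δ)
    (hng : ∀ t, path t ≠ goal)
    (hne : ∀ s, s ≠ goal → (succ s).Nonempty)
    (hmove : ∀ t, path (t + 1) ∈ succ (path t))
    (hgreedy : ∀ t, ∀ s' ∈ succ (path t),
      δ + h t (path (t + 1)) ≤ δ + h t s')
    (hupd : ∀ t, h (t + 1) (path t) =
      max (h t (path t))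
        ((succ (path t)).inf' (hne (path t) (hng t)) (fun s' => δ + h t s')))
    (hframe : ∀ t s, s ≠ path t → h (t + 1) s = h t s)
    (hrecur : ∃ s, {t | path t = s}.Infinite) :
    ∃ s, {t | path t = s}.Infinite ∧ ∀ M : ℝ, ∃ t, M < h t s := by
  by_contra hcon
  push_neg at hcon
  -- hcon : ∀ s, {t | path t = s}.Infinite → ∃ M, ∀ t, h t s ≤ M
  -- monotonicity of h in time
  have hmono1 : ∀ s t, h t s ≤ h (t + 1) s := by
    intro s t
    by_cases hs : s = path t
    · subst hs; rw [hupd]; exact le_max_left _ _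
    · rw [hframe t s hs]
  have hmono : ∀ s, Monotone fun t => h t s :=
    fun s => monotone_nat_of_le_succ (hmono1 s)
  -- eventually the path is in the recurrent set
  have hA : {t : ℕ | ¬ {t' | path t' = path t}.Infinite}.Finite := by
    have hsub : {t : ℕ | ¬ {t' | path t' = path t}.Infinite} ⊆
        ⋃ s ∈ {s : S | ¬ {t' | path t' = s}.Infinite}, {t | path t = s} := by
      intro t ht
      exact Set.mem_biUnion ht rfl
    refine Set.Finite.subset (Set.Finite.biUnion (Set.toFinite _) ?_) hsub
    intro s hs
    simpa [Set.not_infinite] using hs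
  obtain ⟨T, hT⟩ := hA.bddAbove
  have hrec : ∀ t : ℕ, T < t → {t' | path t' = path t}.Infinite := by
    intro t ht
    by_contra h'
    exact absurd (hT h') (not_le_of_gt ht)
  -- sup of heuristic values over time
  set L : S → ℝ := fun s => sSup (Set.range fun t => h t s) with hLdef
  have hbdd : ∀ s, {t | path t = s}.Infinite →
      BddAbove (Set.range fun t => h t s) := by
    intro s hs
    obtain ⟨M, hM⟩ := hcon s hs
    exact ⟨M, by rintro x ⟨t, rfl⟩; exact hM t⟩
  have hL1 : ∀ s, {t | path t = s}.Infinite → ∀ t, h t s ≤ L s := by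
    intro s hs t
    exact le_csSup (hbdd s hs) ⟨t, rfl⟩
  have hτ0 : ∀ s : S, ∃ τ : ℕ,
      {t | path t = s}.Infinite → L s - δ / 2 < h τ s := by
    intro s
    by_cases hs : {t | path t = s}.Infinite
    · have hlt : L s - δ / 2 < sSup (Set.range fun t => h t s) := by
        have : (0:ℝ) < δ / 2 := by linarith
        simpa [hLdef] using sub_lt_self (L s) this
      obtain ⟨x, ⟨τ, rfl⟩, hx⟩ :=
        exists_lt_of_lt_csSup (Set.range_nonempty _) hlt
      exact ⟨τ, fun _ => hx⟩
    · exact ⟨0, fun h' => absurd h' hs⟩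
  choose τ hτ using hτ0
  -- a time after which everything is stabilized
  set T' : ℕ := max (T + 1) (Finset.univ.sup τ) with hT'def
  have hT'rec : ∀ t, T' ≤ t → {t' | path t' = path t}.Infinite := by
    intro t ht
    refine hrec t ?_
    have : T + 1 ≤ t := le_trans (le_max_left _ _) ht
    omega
  have hT'τ : ∀ s, τ s ≤ T' :=
    fun s => le_trans (Finset.le_sup (Finset.mem_univ s)) (le_max_right _ _)
  have hclose : ∀ s, {t | path t = s}.Infinite → ∀ t, T' ≤ t →
      L s - δ / 2 < h t s := by
    intro s hs t ht
    exact lt_of_lt_of_le (hτ s hs) (hmono s (le_trans (hT'τ s) ht))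
  -- key decrease step
  have key : ∀ t, T' ≤ t → L (path (t + 1)) + δ / 2 ≤ L (path t) := by
    intro t ht
    have hrt : {t' | path t' = path t}.Infinite := hT'rec t ht
    have hrt1 : {t' | path t' = path (t + 1)}.Infinite :=
      hT'rec (t + 1) (le_trans ht (Nat.le_succ t))
    have h1 : δ + h t (path (t + 1)) ≤ h (t + 1) (path t) := by
      rw [hupd]
      exact le_max_of_le_right
        (Finset.le_inf' _ _ (fun s' hs' => hgreedy t s' hs'))
    have h2 : L (path (t + 1)) - δ / 2 < h t (path (t + 1)) :=
      hclose (path (t + 1)) hrt1 t ht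
    have h3 : h (t + 1) (path t) ≤ L (path t) := hL1 (path t) hrt (t + 1)
    linarith
  -- iterate the decrease
  have iter : ∀ n : ℕ, L (path (T' + n)) + n * (δ / 2) ≤ L (path T') := by
    intro n
    induction n with
    | zero => simp
    | succ n ih =>
      have hk := key (T' + n) (Nat.le_add_right _ _)
      have : T' + (n + 1) = (T' + n) + 1 := by omega
      rw [this]
      push_cast
      push_cast at ih
      linarith
  -- uniform lower bound
  have hSne : Nonempty S := ⟨path 0⟩
  set m : ℝ := Finset.univ.inf' Finset.univ_nonempty (h 0) with hmdef
  have hmle : ∀ s, {t | path t = s}.Infinite → m ≤ L s := by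
    intro s hs
    exact le_trans (Finset.inf'_le _ (Finset.mem_univ s)) (hL1 s hs 0)
  obtain ⟨n, hn⟩ := exists_nat_gt ((L (path T') - m) / (δ / 2))
  have hδ2 : (0:ℝ) < δ / 2 := by linarith
  have h4 : L (path T') - m < n * (δ / 2) := by
    rw [div_lt_iff₀ hδ2] at hn
    exact hn
  have h5 : m ≤ L (path (T' + n)) :=
    hmle _ (hT'rec (T' + n) (Nat.le_add_right _ _))
  have h6 := iter n
  linarith
end

section
/- In a finite state space where the goal is reachable from every state, an LRTA*-style agent that maintains a heuristic bounded above by w·h* for a fixed w ≥ 1 (where h* is finite everywhere) and whose execution, if infinite, forces some heuristic value in the recurrent set to increase by at least δ > 0 infinitely often, must reach the goal in finitely many steps. -/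
/-! If the goal were never reached, some state's heuristic value would be nondecreasing in time
and jump by at least `δ` infinitely often, hence unbounded, contradicting `h ≤ w · h*`. -/

section JumpsInfinitelyOften

variable {α : Type*} [AddCommGroup α] [LinearOrder α] [IsOrderedAddMonoid α] {f : ℕ → α} {δ : α}

theorem exists_add_nsmul_le_of_infinite_jumps (hf : Monotone f)
    (hjump : {t | f t + δ ≤ f (t + 1)}.Infinite) (n : ℕ) : ∃ t, f 0 + n • δ ≤ f t := by
  induction n with
  | zero => exact ⟨0, by simp⟩
  | succ n ih =>
    obtain ⟨t, ht⟩ := ih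
    obtain ⟨t', ht'_jump, htt'⟩ := hjump.exists_gt t
    refine ⟨t' + 1, ?_⟩
    calc f 0 + (n + 1) • δ = f 0 + n • δ + δ := by rw [succ_nsmul, add_assoc]
      _ ≤ f t' + δ := by gcongr; exact ht.trans (hf htt'.le)
      _ ≤ f (t' + 1) := ht'_jump

theorem not_bddAbove_range_of_infinite_jumps [Archimedean α] (hf : Monotone f) (hδ : 0 < δ)
    (hjump : {t | f t + δ ≤ f (t + 1)}.Infinite) : ¬BddAbove (Set.range f) := by
  rintro ⟨B, hB⟩
  obtain ⟨n, hn⟩ := Archimedean.arch (B - f 0 + δ) hδ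
  obtain ⟨t, ht⟩ := exists_add_nsmul_le_of_infinite_jumps hf hjump n
  have hbig : B + δ ≤ f t :=
    calc B + δ = f 0 + (B - f 0 + δ) := by abel
      _ ≤ f 0 + n • δ := by gcongr
      _ ≤ f t := ht
  exact (lt_add_of_pos_right B hδ).not_ge (hbig.trans (hB ⟨t, rfl⟩))

end JumpsInfinitelyOften

theorem lrta_reaches_goal_general
    {S : Type*}
    (goal : S) (hstar : S → ℝ) (w δ : ℝ)
    (path : ℕ → S) (h : ℕ → S → ℝ)
    (hδ : 0 < δ)
    (hbound : ∀ t s, h t s ≤ w * hstar s)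
    (hmono : ∀ t s, h t s ≤ h (t + 1) s)
    (hforce : (∀ t, path t ≠ goal) →
      ∃ s, {t | path t = s}.Infinite ∧ {t | h t s + δ ≤ h (t + 1) s}.Infinite) :
    ∃ T, path T = goal := by
  by_contra! hnever
  obtain ⟨s, -, hjump⟩ := hforce hnever
  refine not_bddAbove_range_of_infinite_jumps (monotone_nat_of_le_succ (hmono · s)) hδ hjump ?_
  exact ⟨w * hstar s, by rintro _ ⟨t, rfl⟩; exact hbound t s⟩

/-- In a finite state space where the goal is reachable from everywhere
(h* finite everywhere), an LRTA*-style agent whose heuristic is nondecreasing over time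
and always bounded by w·h* (w ≥ 1), and whose execution, if it never reaches the goal,
forces some infinitely-visited state's heuristic to increase by at least δ > 0
infinitely often, must reach the goal in finitely many steps. -/
theorem lrta_reaches_goal
    {S : Type*} [Fintype S]
    (goal : S) (hstar : S → ℝ) (w δ : ℝ)
    (path : ℕ → S) (h : ℕ → S → ℝ)
    (hw : 1 ≤ w) (hδ : 0 < δ)
    (hbound : ∀ t s, h t s ≤ w * hstar s)
    (hmono : ∀ t s, h t s ≤ h (t + 1) s)
    (hforce : (∀ t, path t ≠ goal) →
      ∃ s, {t | path t = s}.Infinite ∧ {t | h t s + δ ≤ h (t + 1) s}.Infinite) :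
    ∃ T, path T = goal :=
  lrta_reaches_goal_general goal hstar w δ path h hδ hbound hmono hforce
end
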